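/- arXiv:1809.06051 — 3 statements merged into one kernel-verified Lean document; each statement's English description precedes it below -/
import Mathlib

section
/- Let (W,ω) be a fusion frame for H. Then the union of the ranges ran(U*), taken over all bounded operators U : 𝔥 → H satisfying U T_{W,ω} = Id_H (i.e. over all bounded left inverses of the analysis operator T_{W,ω}), is dense in 𝔥. -/
/-!
Since the lower frame bound makes `T` bounded below, it has closed range and hence a bounded left
inverse `U₀`. If `U₀` is one left inverse and `T* y ≠ 0`, adding to `U₀` the rank-one operator
`v ↦ ⟪w, v⟫ c`, where `w = y - U₀* T* y` is orthogonal to `ran T` and `⟪c, T* y⟫ = 1`, gives another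
left inverse `U` with `U* (T* y) = y`. So the union contains every `y` outside the proper closed
subspace `ker T*`, and such a complement is dense.
-/

noncomputable section

open ContinuousLinearMap

/-- Orthogonal projection onto a closed subspace, as an operator on `H`. -/
def fproj {H : Type*} [NormedAddCommGroup H] [InnerProductSpace ℂ H] [CompleteSpace H]
    (W : Submodule ℂ H) (hW : IsClosed (W : Set H)) : H →L[ℂ] H :=
  haveI : CompleteSpace W := hW.completeSpace_coe
  W.subtypeL.comp (Submodule.orthogonalProjection W)

open InnerProductSpace

theorem ContinuousLinearMap.dense_setOf_apply_ne_zero {R M N : Type*} [NontriviallyNormedField R]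
    [AddCommGroup M] [Module R M] [TopologicalSpace M] [ContinuousAdd M] [ContinuousSMul R M]
    [AddCommGroup N] [Module R N] [TopologicalSpace N]
    {A : M →L[R] N} (hA : A ≠ 0) : Dense {y | A y ≠ 0} := by
  refine interior_eq_empty_iff_dense_compl.mp (Set.not_nonempty_iff_eq_empty.mp fun h => hA ?_)
  have hker := (LinearMap.ker (A : M →ₗ[R] N)).eq_top_of_nonempty_interior' h
  exact ContinuousLinearMap.coe_injective (LinearMap.ker_eq_top.mp hker)

theorem lp.hasSum_norm_sq {I : Type*} {E : I → Type*} [∀ i, NormedAddCommGroup (E i)]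
    (f : lp E 2) : HasSum (fun i => ‖f i‖ ^ 2) (‖f‖ ^ 2) := by
  simpa using lp.hasSum_norm (p := 2) (by norm_num) f

theorem ContinuousLinearMap.exists_antilipschitzWith_of_mul_sq_le {𝕜 E F : Type*}
    [NontriviallyNormedField 𝕜] [SeminormedAddCommGroup E] [NormedSpace 𝕜 E]
    [SeminormedAddCommGroup F] [NormedSpace 𝕜 F] (T : E →L[𝕜] F) {α : ℝ} (hα : 0 < α)
    (h : ∀ x, α * ‖x‖ ^ 2 ≤ ‖T x‖ ^ 2) : ∃ K, AntilipschitzWith K T := by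
  refine ⟨Real.toNNReal (Real.sqrt α)⁻¹, T.antilipschitz_of_bound fun x => ?_⟩
  have hsqrt : 0 < Real.sqrt α := Real.sqrt_pos.mpr hα
  rw [Real.coe_toNNReal _ (inv_nonneg.mpr hsqrt.le), le_inv_mul_iff₀ hsqrt]
  refine (pow_le_pow_iff_left₀ (by positivity) (norm_nonneg _) two_ne_zero).mp ?_
  rw [mul_pow, Real.sq_sqrt hα.le]
  exact h x

section

variable {𝕜 E F : Type*} [RCLike 𝕜] [NormedAddCommGroup E] [InnerProductSpace 𝕜 E]

theorem exists_inner_eq_one {z : E} (hz : z ≠ 0) : ∃ c : E, inner 𝕜 c z = 1 :=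
  ⟨(starRingEnd 𝕜 (inner 𝕜 z z)⁻¹) • z, by
    rw [inner_smul_left, RCLike.conj_conj, inv_mul_cancel₀ (inner_self_ne_zero.mpr hz)]⟩

theorem Submodule.closedComplemented_of_isClosed [CompleteSpace E] {K : Submodule 𝕜 E}
    (hK : IsClosed (K : Set E)) : K.ClosedComplemented :=
  haveI := hK.completeSpace_coe
  ⟨K.orthogonalProjectionOnto, K.orthogonalProjectionOnto_mem_subspace_eq_self⟩

variable [CompleteSpace E] [NormedAddCommGroup F] [InnerProductSpace 𝕜 F] [CompleteSpace F]

theorem ContinuousLinearMap.exists_comp_eq_one_of_antilipschitz {T : E →L[𝕜] F} {K : NNReal}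
    (hT : AntilipschitzWith K T) : ∃ U : F →L[𝕜] E, U ∘L T = 1 := by
  have hclosed : IsClosed (Set.range T) := hT.isClosed_range T.uniformContinuous
  have hcompl : (LinearMap.range (T : E →ₗ[𝕜] F)).ClosedComplemented :=
    Submodule.closedComplemented_of_isClosed (by rwa [LinearMap.coe_range])
  obtain ⟨U, hU⟩ := HasLeftInverse.of_injective_of_isClosed_range_of_closedComplement_range
    hT.injective hclosed hcompl
  exact ⟨U, ContinuousLinearMap.ext hU⟩

theorem ContinuousLinearMap.exists_comp_eq_one_adjoint_apply_eq {T : E →L[𝕜] F} {U₀ : F →L[𝕜] E}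
    (hU₀ : U₀ ∘L T = 1) {y : F} (hy : adjoint T y ≠ 0) :
    ∃ U : F →L[𝕜] E, U ∘L T = 1 ∧ adjoint U (adjoint T y) = y := by
  set z := adjoint T y
  obtain ⟨c, hc⟩ := exists_inner_eq_one (𝕜 := 𝕜) hy
  set w := y - adjoint U₀ z
  have hw : adjoint T w = 0 := by
    rw [map_sub, ← comp_apply, ← adjoint_comp, hU₀, adjoint_one, one_apply_eq_self, sub_self]
  refine ⟨U₀ + rankOne 𝕜 c w, ?_, ?_⟩
  · rw [add_comp, rankOne_comp, hw, map_zero, hU₀, add_zero]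
  · rw [map_add, adjoint_rankOne, add_apply, rankOne_apply, hc, one_smul, add_sub_cancel]

theorem ContinuousLinearMap.dense_iUnion_range_adjoint [Nontrivial E] {T : E →L[𝕜] F}
    {U₀ : F →L[𝕜] E} (hU₀ : U₀ ∘L T = 1) :
    Dense (⋃ U ∈ {U : F →L[𝕜] E | U ∘L T = 1}, Set.range (adjoint U)) := by
  have hT : adjoint T ≠ 0 := fun h => one_ne_zero (α := E →L[𝕜] E) <| by
    rw [← adjoint_one, ← hU₀, adjoint_comp, h, zero_comp]
  refine (dense_setOf_apply_ne_zero hT).mono fun y hy => ?_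
  obtain ⟨U, hU, hUy⟩ := exists_comp_eq_one_adjoint_apply_eq hU₀ hy
  exact Set.mem_biUnion hU ⟨_, hUy⟩

end

theorem dense_union_ranges_adjoint_leftInverses_general
    {H : Type*} [NormedAddCommGroup H] [InnerProductSpace ℂ H] [CompleteSpace H]
    {I : Type*}
    (W : I → Submodule ℂ H)
    (hW : ∀ i, IsClosed ((W i) : Set H))
    (ω : I → ℝ)
    (α β : ℝ) (hα : 0 < α)
    (hframe : ∀ x : H, ∃ s : ℝ,
      HasSum (fun i => ω i ^ 2 * ‖fproj (W i) (hW i) x‖ ^ 2) s ∧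
      α * ‖x‖ ^ 2 ≤ s ∧ s ≤ β * ‖x‖ ^ 2)
    -- the analysis operator T_{W,ω}
    (T : H →L[ℂ] lp (fun _ : I => H) 2)
    (hT : ∀ (x : H) (i : I), T x i = ω i • fproj (W i) (hW i) x) :
    Dense (⋃ U ∈ {U : lp (fun _ : I => H) 2 →L[ℂ] H | U ∘L T = 1},
      Set.range ⇑(ContinuousLinearMap.adjoint U)) := by
  have hlower : ∀ x, α * ‖x‖ ^ 2 ≤ ‖T x‖ ^ 2 := fun x => by
    obtain ⟨s, hs, hαs, -⟩ := hframe x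
    have hTx : HasSum (fun i => ω i ^ 2 * ‖fproj (W i) (hW i) x‖ ^ 2) (‖T x‖ ^ 2) := by
      simpa only [hT, norm_smul, Real.norm_eq_abs, mul_pow, sq_abs] using lp.hasSum_norm_sq (T x)
    rwa [← hs.unique hTx]
  obtain ⟨K, hK⟩ := T.exists_antilipschitzWith_of_mul_sq_le hα hlower
  obtain ⟨U₀, hU₀⟩ := exists_comp_eq_one_of_antilipschitz hK
  rcases subsingleton_or_nontrivial H with hH | hH
  · have : Subsingleton (lp (fun _ : I => H) 2) :=
      ⟨fun _ _ => lp.ext (funext fun _ => Subsingleton.elim _ _)⟩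
    exact fun _ => subset_closure (Set.mem_biUnion hU₀ ⟨0, Subsingleton.elim _ _⟩)
  · exact dense_iUnion_range_adjoint hU₀

/-- For a fusion frame `(W,ω)` with analysis operator `T_{W,ω} : H → 𝔥`,
the union of `ran(U*)` over all bounded left inverses `U` of `T_{W,ω}` is dense in `𝔥`. -/
theorem dense_union_ranges_adjoint_leftInverses
    {H : Type*} [NormedAddCommGroup H] [InnerProductSpace ℂ H] [CompleteSpace H]
    [TopologicalSpace.SeparableSpace H]
    {I : Type*} [Countable I]
    (W : I → Submodule ℂ H)
    (hW : ∀ i, IsClosed ((W i) : Set H))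
    (ω : I → ℝ)
    (hωseq : ∀ i, 0 ≤ ω i ∧ (ω i = 0 ↔ W i = ⊥))
    (α β : ℝ) (hα : 0 < α)
    (hframe : ∀ x : H, ∃ s : ℝ,
      HasSum (fun i => ω i ^ 2 * ‖fproj (W i) (hW i) x‖ ^ 2) s ∧
      α * ‖x‖ ^ 2 ≤ s ∧ s ≤ β * ‖x‖ ^ 2)
    -- the analysis operator T_{W,ω}
    (T : H →L[ℂ] lp (fun _ : I => H) 2)
    (hT : ∀ (x : H) (i : I), T x i = ω i • fproj (W i) (hW i) x) :
    Dense (⋃ U ∈ {U : lp (fun _ : I => H) 2 →L[ℂ] H | U ∘L T = 1},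
      Set.range ⇑(ContinuousLinearMap.adjoint U)) :=
  dense_union_ranges_adjoint_leftInverses_general W hW ω α β hα hframe T hT
end
end

section
/- Let (W,ω) and (V,υ) be fusion Riesz bases in H, m ∈ ℓ∞(I) and R ∈ ℓ∞(I,B(H)). Then the Bessel fusion multiplier M_{mR,V,W} is invertible on H if and only if condition C(m,R) holds. -/
noncomputable section

open ContinuousLinearMap

/-- Condition `C(m,R)` with constants `γ, δ`. -/
def CondC {H : Type*} [NormedAddCommGroup H] [InnerProductSpace ℂ H] [CompleteSpace H]
    {I : Type*} (m : I → ℂ) (R : I → H →L[ℂ] H) (γ δ : ℝ) : Prop :=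
  0 < γ ∧ 0 < δ ∧ ∀ (j : I) (x : H),
    γ * ‖x‖ ≤ ‖(starRingEnd ℂ) (m j) • (ContinuousLinearMap.adjoint (R j)) x‖ ∧
    ‖(starRingEnd ℂ) (m j) • (ContinuousLinearMap.adjoint (R j)) x‖ ≤ δ * ‖x‖ ∧
    γ * ‖x‖ ≤ ‖m j • (R j) x‖

/-!
Writing `D` for the operator `{xᵢ} ↦ {mᵢ Rᵢ xᵢ}` on `ℓ²(I, H)`, the multiplier factors as
`M = T_V ∘ D ∘ T_W*`. For fusion Riesz bases `T_V` and `T_W*` are isomorphisms, so `M` is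
invertible iff `D` is. A block-diagonal operator is invertible iff its blocks are, with uniformly
bounded inverses (the inverse of the block `j` is the `j`-th block of `D⁻¹`). Finally, on a Hilbert
space `T` has an inverse of norm at most `1/γ` iff both `T` and `T*` are bounded below by `γ`,
which is condition `C(m,R)`; its upper bound `δ` is automatic since `m` and `R` are bounded.
-/

open Function
open scoped ENNReal

namespace lp

variable {𝕜 : Type*} [RCLike 𝕜] {E : Type*} [NormedAddCommGroup E] [NormedSpace 𝕜 E]
  {I : Type*} (p : ℝ≥0∞) [Fact (1 ≤ p)]

def diagonal (T : I → E →L[𝕜] E) (hT : BddAbove (Set.range fun i => ‖T i‖)) :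
    lp (fun _ : I => E) p →L[𝕜] lp (fun _ : I => E) p :=
  let C : ℝ := ⨆ i, ‖T i‖
  have hC : 0 ≤ C := Real.iSup_nonneg fun i => norm_nonneg _
  have hle : ∀ (x : lp (fun _ : I => E) p) i, ‖T i (x i)‖ ≤ ‖(C : 𝕜) • x i‖ := fun x i => by
    rw [norm_smul, RCLike.norm_ofReal, abs_of_nonneg hC]
    exact (T i).le_of_opNorm_le (le_ciSup hT i) (x i)
  LinearMap.mkContinuous
    { toFun := fun x => ⟨fun i => T i (x i), ((lp.memℓp x).const_smul _).mono' (hle x)⟩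
      map_add' := fun x y => by ext i; exact map_add _ _ _
      map_smul' := fun c x => by ext i; exact map_smul _ _ _ }
    C fun x => by
      refine (lp.norm_mono (zero_lt_one.trans_le Fact.out).ne' (y := (C : 𝕜) • x) (hle x)).trans ?_
      rw [norm_smul, RCLike.norm_ofReal, abs_of_nonneg hC]

variable {p} (T : I → E →L[𝕜] E) (hT : BddAbove (Set.range fun i => ‖T i‖))

@[simp]
theorem diagonal_apply (x : lp (fun _ : I => E) p) (i : I) : diagonal p T hT x i = T i (x i) :=
  rfl

theorem diagonal_single [DecidableEq I] (j : I) (v : E) :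
    diagonal p T hT (lp.single p j v) = lp.single p j (T j v) := by
  ext i
  exact Pi.apply_single (fun i => T i) (fun i => map_zero _) j v i

theorem isUnit_diagonal_iff :
    IsUnit (diagonal p T hT) ↔
      ∃ C, ∀ j, ∃ S : E →L[𝕜] E, T j * S = 1 ∧ S * T j = 1 ∧ ‖S‖ ≤ C := by
  classical
  have hp : p ≠ 0 := (zero_lt_one.trans_le Fact.out).ne'
  constructor
  · rintro ⟨u, hu⟩
    have hDF : ∀ z, diagonal p T hT (u.inv z) = z := fun z => by
      rw [← hu]; exact congr($(u.val_inv) z)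
    have hFD : ∀ z, u.inv (diagonal p T hT z) = z := fun z => by
      rw [← hu]; exact congr($(u.inv_val) z)
    refine ⟨‖u.inv‖, fun j => ⟨(lp.evalCLM 𝕜 (fun _ : I => E) p j).comp
      (u.inv.comp (lp.singleContinuousLinearMap 𝕜 (fun _ : I => E) p j)), ?_, ?_, ?_⟩⟩
    · ext y
      change T j (u.inv (lp.single (E := fun _ : I => E) p j y) j) = y
      rw [← diagonal_apply T hT, hDF, lp.single_apply_self]
    · ext y
      change u.inv (lp.single p j (T j y)) j = y
      rw [← diagonal_single T hT, hFD, lp.single_apply_self]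
    · refine opNorm_le_bound _ (norm_nonneg _) fun y => ?_
      change ‖u.inv (lp.single (E := fun _ : I => E) p j y) j‖ ≤ ‖u.inv‖ * ‖y‖
      calc ‖u.inv (lp.single (E := fun _ : I => E) p j y) j‖
          ≤ ‖u.inv (lp.single (E := fun _ : I => E) p j y)‖ := lp.norm_apply_le_norm hp _ j
        _ ≤ ‖u.inv‖ * ‖lp.single (E := fun _ : I => E) p j y‖ := u.inv.le_opNorm _
        _ = ‖u.inv‖ * ‖y‖ := by rw [lp.norm_single (pos_iff_ne_zero.mpr hp)]
  · rintro ⟨C, hS⟩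
    choose S hTS hST hSC using hS
    refine ⟨⟨diagonal p T hT, diagonal p S ⟨C, Set.forall_mem_range.mpr hSC⟩, ?_, ?_⟩, rfl⟩
    · ext x i
      exact congr($(hTS i) (x i))
    · ext x i
      exact congr($(hST i) (x i))

end lp

namespace ContinuousLinearMap

section Normed

variable {𝕜 : Type*} [NontriviallyNormedField 𝕜] {E F : Type*}
  [NormedAddCommGroup E] [NormedSpace 𝕜 E] [NormedAddCommGroup F] [NormedSpace 𝕜 F]

theorem mul_norm_le_norm_apply_of_mul_eq_one {T S : E →L[𝕜] E} (hST : S * T = 1) {γ : ℝ}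
    (hγ : 0 < γ) (hS : ‖S‖ ≤ γ⁻¹) (x : E) : γ * ‖x‖ ≤ ‖T x‖ := by
  rw [← le_inv_mul_iff₀ hγ]
  calc ‖x‖ = ‖S (T x)‖ := congr(‖$hST x‖).symm
    _ ≤ ‖S‖ * ‖T x‖ := S.le_opNorm _
    _ ≤ γ⁻¹ * ‖T x‖ := by gcongr

variable [CompleteSpace E] [CompleteSpace F]

theorem isUnit_comp_comp_iff {f : F →L[𝕜] E} {g : E →L[𝕜] F}
    (hf : Bijective f) (hg : Bijective g) (D : F →L[𝕜] F) :
    IsUnit (f ∘L D ∘L g) ↔ IsUnit D := by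
  let ef := ContinuousLinearEquiv.ofBijective f (LinearMap.ker_eq_bot.mpr hf.1)
    (LinearMap.range_eq_top.mpr hf.2)
  let eg := ContinuousLinearEquiv.ofBijective g (LinearMap.ker_eq_bot.mpr hg.1)
    (LinearMap.range_eq_top.mpr hg.2)
  have : f ∘L D ∘L g = ef.conjContinuousAlgEquiv D * (eg.trans ef).toUnit := by
    ext x
    change f (D (g x)) = f (D (ef.symm (ef (eg x))))
    rw [ef.symm_apply_apply]
    rfl
  rw [this, Units.isUnit_mul_units, isUnit_map_iff]

end Normed

section Hilbert

variable {𝕜 : Type*} [RCLike 𝕜] {E F : Type*} [NormedAddCommGroup E] [InnerProductSpace 𝕜 E]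
  [CompleteSpace E] [NormedAddCommGroup F] [InnerProductSpace 𝕜 F] [CompleteSpace F]

theorem bijective_adjoint {T : E →L[𝕜] F} (hT : Bijective T) : Bijective (adjoint T) := by
  let e := ContinuousLinearEquiv.ofBijective T (LinearMap.ker_eq_bot.mpr hT.1)
    (LinearMap.range_eq_top.mpr hT.2)
  have h₁ : adjoint T ∘L adjoint (e.symm : F →L[𝕜] E) = .id 𝕜 E := by
    rw [← adjoint_comp, show (e.symm : F →L[𝕜] E) ∘L T = .id 𝕜 E by ext; simp [e], adjoint_id]
  have h₂ : adjoint (e.symm : F →L[𝕜] E) ∘L adjoint T = .id 𝕜 F := by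
    rw [← adjoint_comp, show T ∘L (e.symm : F →L[𝕜] E) = .id 𝕜 F by ext; simp [e], adjoint_id]
  exact bijective_iff_has_inverse.mpr
    ⟨_, fun x => DFunLike.congr_fun h₂ x, fun x => DFunLike.congr_fun h₁ x⟩

theorem exists_inverse_norm_le_iff {T : E →L[𝕜] E} {γ : ℝ} (hγ : 0 < γ) :
    (∃ S : E →L[𝕜] E, T * S = 1 ∧ S * T = 1 ∧ ‖S‖ ≤ γ⁻¹) ↔
      ∀ x, γ * ‖x‖ ≤ ‖T x‖ ∧ γ * ‖x‖ ≤ ‖adjoint T x‖ := by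
  constructor
  · rintro ⟨S, hTS, hST, hS⟩ x
    refine ⟨mul_norm_le_norm_apply_of_mul_eq_one hST hγ hS x, ?_⟩
    have hS' : ‖star S‖ ≤ γ⁻¹ := by rwa [star_eq_adjoint, LinearIsometryEquiv.norm_map]
    have hST' : star S * star T = 1 := by rw [← star_mul, hTS, star_one]
    simpa [star_eq_adjoint] using mul_norm_le_norm_apply_of_mul_eq_one hST' hγ hS' x
  · intro h
    have hanti : AntilipschitzWith ⟨γ⁻¹, inv_nonneg.mpr hγ.le⟩ T :=
      T.antilipschitz_of_bound fun x => (le_inv_mul_iff₀ hγ).mpr (h x).1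
    have hdense : T.range.topologicalClosure = ⊤ := by
      rw [Submodule.topologicalClosure_eq_top_iff, orthogonal_range, Submodule.eq_bot_iff]
      intro x hx
      have h0 := (h x).2
      rw [show adjoint T x = 0 from hx, norm_zero] at h0
      exact norm_le_zero_iff.mp (nonpos_of_mul_nonpos_right h0 hγ)
    obtain ⟨u, rfl⟩ := isUnit_iff_bijective.mpr
      ((bijective_iff_dense_range_and_antilipschitz _).mpr ⟨hdense, _, hanti⟩)
    refine ⟨u.inv, u.val_inv, u.inv_val, opNorm_le_bound _ (inv_nonneg.mpr hγ.le) fun y => ?_⟩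
    rw [le_inv_mul_iff₀ hγ]
    calc γ * ‖u.inv y‖ ≤ ‖u.val (u.inv y)‖ := (h _).1
      _ = ‖y‖ := congr(‖$(u.val_inv) y‖)

theorem adjoint_apply_of_hasSum {I : Type*} {A : I → E →L[𝕜] F}
    {T : lp (fun _ : I => E) 2 →L[𝕜] F}
    (hT : ∀ x : lp (fun _ : I => E) 2, HasSum (fun i => A i (x i)) (T x)) (y : F) (j : I) :
    adjoint T y j = adjoint (A j) y := by
  classical
  have hT_single : ∀ v, T (lp.single 2 j v) = A j v := fun v => by
    refine (hT _).unique (hasSum_single j fun i hij => ?_) |>.trans ?_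
    · rw [lp.single_apply_ne (E := fun _ : I => E) 2 j v hij, map_zero]
    · rw [lp.single_apply_self]
  refine ext_inner_right 𝕜 fun v => ?_
  rw [← lp.inner_single_right, adjoint_inner_left, adjoint_inner_left, hT_single]

end Hilbert

end ContinuousLinearMap

section Fusion

variable {H : Type*} [NormedAddCommGroup H] [InnerProductSpace ℂ H] [CompleteSpace H] {I : Type*}

theorem isSelfAdjoint_smul_fproj (ω : ℝ) (W : Submodule ℂ H) (hW : IsClosed (W : Set H)) :
    IsSelfAdjoint (ω • fproj W hW) :=
  haveI : CompleteSpace W := hW.completeSpace_coe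
  (IsSelfAdjoint.all ω).smul (isSelfAdjoint_starProjection W)

theorem multiplier_eq_comp {W V : I → Submodule ℂ H} {hW : ∀ i, IsClosed (W i : Set H)}
    {hV : ∀ i, IsClosed (V i : Set H)} {ω υ : I → ℝ} {TW TV : lp (fun _ : I => H) 2 →L[ℂ] H}
    (hTW : ∀ x : lp (fun _ : I => H) 2, HasSum (fun i => ω i • fproj (W i) (hW i) (x i)) (TW x))
    (hTV : ∀ x : lp (fun _ : I => H) 2, HasSum (fun i => υ i • fproj (V i) (hV i) (x i)) (TV x))
    {m : I → ℂ} {R : I → H →L[ℂ] H} (hmR : BddAbove (Set.range fun i => ‖m i • R i‖))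
    {M : H →L[ℂ] H} (hM : ∀ x : H, HasSum
      (fun i => m i • (υ i * ω i) • fproj (V i) (hV i) ((R i) (fproj (W i) (hW i) x))) (M x)) :
    M = TV ∘L lp.diagonal 2 (fun i => m i • R i) hmR ∘L adjoint TW := by
  ext x
  refine (hM x).unique ((hTV (lp.diagonal 2 (fun i => m i • R i) hmR (adjoint TW x))).congr_fun
    fun i => ?_)
  rw [lp.diagonal_apply, adjoint_apply_of_hasSum (A := fun i => ω i • fproj (W i) (hW i)) hTW,
    (isSelfAdjoint_smul_fproj _ _ _).adjoint_eq, smul_apply, smul_apply, map_smul,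
    map_smul_of_tower, map_smul_of_tower, mul_smul, smul_comm (m i)]

end Fusion

theorem bddAbove_range_norm_smul {ι 𝕜 E : Type*} [NormedField 𝕜] [SeminormedAddCommGroup E]
    [NormedSpace 𝕜 E] {m : ι → 𝕜} {R : ι → E} (hm : BddAbove (Set.range fun i => ‖m i‖))
    (hR : BddAbove (Set.range fun i => ‖R i‖)) : BddAbove (Set.range fun i => ‖m i • R i‖) := by
  obtain ⟨a, ha⟩ := hm
  obtain ⟨b, hb⟩ := hR
  refine ⟨a * b, Set.forall_mem_range.mpr fun i => (norm_smul_le _ _).trans ?_⟩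
  exact mul_le_mul (ha ⟨i, rfl⟩) (hb ⟨i, rfl⟩) (norm_nonneg _) ((norm_nonneg _).trans (ha ⟨i, rfl⟩))

theorem exists_condC_iff {H : Type*} [NormedAddCommGroup H] [InnerProductSpace ℂ H]
    [CompleteSpace H] {I : Type*} {m : I → ℂ} {R : I → H →L[ℂ] H}
    (hmR : BddAbove (Set.range fun i => ‖m i • R i‖)) :
    (∃ γ δ, CondC m R γ δ) ↔
      ∃ C, ∀ j, ∃ S : H →L[ℂ] H, (m j • R j) * S = 1 ∧ S * (m j • R j) = 1 ∧ ‖S‖ ≤ C := by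
  have hadj : ∀ j x, adjoint (m j • R j) x = (starRingEnd ℂ) (m j) • adjoint (R j) x :=
    fun j x => by rw [LinearIsometryEquiv.map_smulₛₗ]; rfl
  constructor
  · rintro ⟨γ, δ, hγ, -, hC⟩
    exact ⟨γ⁻¹, fun j => (exists_inverse_norm_le_iff hγ).mpr fun x =>
      ⟨(hC j x).2.2, by rw [hadj]; exact (hC j x).1⟩⟩
  · rintro ⟨C, hS⟩
    obtain ⟨c, hc⟩ := hmR
    have hγ : 0 < (max C 1)⁻¹ := by positivity
    refine ⟨(max C 1)⁻¹, max c 1, hγ, by positivity, fun j x => ?_⟩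
    obtain ⟨S, hTS, hST, hSC⟩ := hS j
    obtain ⟨hlow, hlow_adj⟩ := (exists_inverse_norm_le_iff hγ).mp
      ⟨S, hTS, hST, by rw [inv_inv]; exact hSC.trans (le_max_left _ _)⟩ x
    rw [← hadj]
    refine ⟨hlow_adj, ?_, hlow⟩
    calc ‖adjoint (m j • R j) x‖ ≤ ‖adjoint (m j • R j)‖ * ‖x‖ := le_opNorm _ _
      _ = ‖m j • R j‖ * ‖x‖ := by rw [LinearIsometryEquiv.norm_map]
      _ ≤ max c 1 * ‖x‖ := by gcongr; exact (hc ⟨j, rfl⟩).trans (le_max_left _ _)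

theorem riesz_multiplier_invertible_iff_condC_general
    {H : Type*} [NormedAddCommGroup H] [InnerProductSpace ℂ H] [CompleteSpace H]
    {I : Type*}
    (W V : I → Submodule ℂ H)
    (hW : ∀ i, IsClosed ((W i) : Set H)) (hV : ∀ i, IsClosed ((V i) : Set H))
    (ω υ : I → ℝ)
    -- (W,ω) and (V,υ) are fusion Riesz bases: bijective synthesis operators
    (TW TV : lp (fun _ : I => H) 2 →L[ℂ] H)
    (hTW : ∀ x : lp (fun _ : I => H) 2, HasSum (fun i => ω i • fproj (W i) (hW i) (x i)) (TW x))
    (hTV : ∀ x : lp (fun _ : I => H) 2, HasSum (fun i => υ i • fproj (V i) (hV i) (x i)) (TV x))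
    (hTWbij : Function.Bijective TW) (hTVbij : Function.Bijective TV)
    (m : I → ℂ) (hm : BddAbove (Set.range fun i => ‖m i‖))
    (R : I → H →L[ℂ] H) (hR : BddAbove (Set.range fun i => ‖R i‖))
    -- the multiplier M_{mR,V,W}
    (M : H →L[ℂ] H)
    (hM : ∀ x : H, HasSum
      (fun i => m i • (υ i * ω i) • fproj (V i) (hV i) ((R i) (fproj (W i) (hW i) x))) (M x)) :
    (∃ N : H →L[ℂ] H, M ∘L N = 1 ∧ N ∘L M = 1) ↔ ∃ γ δ : ℝ, CondC m R γ δ := by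
  have hmR := bddAbove_range_norm_smul hm hR
  refine isUnit_iff_exists.symm.trans ?_
  rw [multiplier_eq_comp hTW hTV hmR hM, isUnit_comp_comp_iff hTVbij (bijective_adjoint hTWbij),
    lp.isUnit_diagonal_iff, exists_condC_iff hmR]

/-- If `(W,ω)` and `(V,υ)` are fusion Riesz bases, then the Bessel fusion
multiplier `M_{mR,V,W}` is invertible on `H` if and only if condition `C(m,R)` holds. -/
theorem riesz_multiplier_invertible_iff_condC
    {H : Type*} [NormedAddCommGroup H] [InnerProductSpace ℂ H] [CompleteSpace H]
    [TopologicalSpace.SeparableSpace H]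
    {I : Type*} [Countable I]
    (W V : I → Submodule ℂ H)
    (hW : ∀ i, IsClosed ((W i) : Set H)) (hV : ∀ i, IsClosed ((V i) : Set H))
    (ω υ : I → ℝ)
    (hωseq : ∀ i, 0 ≤ ω i ∧ (ω i = 0 ↔ W i = ⊥))
    (hυseq : ∀ i, 0 ≤ υ i ∧ (υ i = 0 ↔ V i = ⊥))
    (βW βV : ℝ)
    (hWB : ∀ x : H, ∃ s : ℝ,
      HasSum (fun i => ω i ^ 2 * ‖fproj (W i) (hW i) x‖ ^ 2) s ∧ s ≤ βW * ‖x‖ ^ 2)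
    (hVB : ∀ x : H, ∃ s : ℝ,
      HasSum (fun i => υ i ^ 2 * ‖fproj (V i) (hV i) x‖ ^ 2) s ∧ s ≤ βV * ‖x‖ ^ 2)
    -- (W,ω) and (V,υ) are fusion Riesz bases: bijective synthesis operators
    (TW TV : lp (fun _ : I => H) 2 →L[ℂ] H)
    (hTW : ∀ x : lp (fun _ : I => H) 2, HasSum (fun i => ω i • fproj (W i) (hW i) (x i)) (TW x))
    (hTV : ∀ x : lp (fun _ : I => H) 2, HasSum (fun i => υ i • fproj (V i) (hV i) (x i)) (TV x))
    (hTWbij : Function.Bijective TW) (hTVbij : Function.Bijective TV)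
    (m : I → ℂ) (hm : BddAbove (Set.range fun i => ‖m i‖))
    (R : I → H →L[ℂ] H) (hR : BddAbove (Set.range fun i => ‖R i‖))
    -- the multiplier M_{mR,V,W}
    (M : H →L[ℂ] H)
    (hM : ∀ x : H, HasSum
      (fun i => m i • (υ i * ω i) • fproj (V i) (hV i) ((R i) (fproj (W i) (hW i) x))) (M x)) :
    (∃ N : H →L[ℂ] H, M ∘L N = 1 ∧ N ∘L M = 1) ↔ ∃ γ δ : ℝ, CondC m R γ δ :=
  riesz_multiplier_invertible_iff_condC_general W V hW hV ω υ TW TV hTW hTV hTWbij hTVbij m hm R hR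
    M hM
end
end

section
/- Let H ≠ {0}, let (W,ω) and (V,υ) be fusion frames for H, and let m ∈ ℓ∞(I) and R ∈ ℓ∞(I,B(H)) satisfy condition C(m,R). Assume M := M_{mR,V,W} is invertible on H. For each i ∈ I set L_i := υ_i R_i* P_{V_i} (M*)^{-1} − (ω_i/conj(m_i)) P_{W_i} S_{W,ω}^{-1} and Q_i† := ω_i P_{W_i} S_{W,ω}^{-1} + conj(m_i) L_i (so Q_i† = conj(m_i) υ_i R_i* P_{V_i} (M*)^{-1}). Then Q† := {Q_i†}_{i∈I} is an operator-valued dual frame of A_W := {ω_iP_{W_i}}_{i∈I}, and it is the unique operator-valued dual frame Q of A_W with the property that M^{-1} = T*_Q D_{(mR)^{-1}} T_B for every operator-valued dual frame B of A_V := {υ_iP_{V_i}}_{i∈I}, where D_{(mR)^{-1}} : 𝔥 → 𝔥 is {x_i} ↦ {(m_iR_i)^{-1}x_i}. -/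
noncomputable section

open ContinuousLinearMap

/-- `B` is an operator-valued Bessel sequence in `B(H)`. -/
def OpBessel {H : Type*} [NormedAddCommGroup H] [InnerProductSpace ℂ H] [CompleteSpace H]
    {I : Type*} (B : I → H →L[ℂ] H) : Prop :=
  ∃ β : ℝ, ∀ x : H, ∃ s : ℝ, HasSum (fun i => ‖B i x‖ ^ 2) s ∧ s ≤ β * ‖x‖ ^ 2

/-- `B` is an operator-valued dual frame of `A`: `B` is Bessel and `Σ_i B_i* A_i x = x`. -/
def IsOpDualOf {H : Type*} [NormedAddCommGroup H] [InnerProductSpace ℂ H] [CompleteSpace H]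
    {I : Type*} (B A : I → H →L[ℂ] H) : Prop :=
  OpBessel B ∧ ∀ x : H, HasSum (fun i => (ContinuousLinearMap.adjoint (B i)) (A i x)) x

/-!
Write `A_i = ω_i P_{W_i}`, `C_i = υ_i P_{V_i}` and `D_i = m_i R_i`, so that `M = Σ_i C_i* D_i A_i`
and `Q_i† = D_i* C_i (M*)⁻¹`. Then `Σ_i Q_i†* A_i = M⁻¹ M = 1`, and for every dual `B` of `C`,
`Σ_i Q_i†* D_i⁻¹ B_i = M⁻¹ Σ_i C_i* B_i = M⁻¹`, because duality of Bessel sequences is symmetric.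
Conversely, the sums `Σ_i F_i B_i` over all duals `B` of `C` determine every `F_j`: perturbing one
dual `B₀` (here `D_i A_i M⁻¹`) by the rank-one family `y ↦ ⟪z, y⟫ (δ_{ij} z - B₀_i C_j* z)` gives
another dual, and comparing the two sums forces `F_j z = M⁻¹ C_j* z`.
-/

open scoped ComplexInnerProductSpace
open InnerProductSpace (rankOne)

section

variable {H : Type*} [NormedAddCommGroup H] [InnerProductSpace ℂ H] [CompleteSpace H] {I : Type*}

theorem opBessel_iff_sum_le {A : I → H →L[ℂ] H} :
    OpBessel A ↔ ∃ β, 0 ≤ β ∧ ∀ (x : H) (t : Finset I), ∑ i ∈ t, ‖A i x‖ ^ 2 ≤ β * ‖x‖ ^ 2 := by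
  constructor
  · rintro ⟨β, hβ⟩
    refine ⟨max β 0, le_max_right _ _, fun x t => ?_⟩
    obtain ⟨s, hs, hsβ⟩ := hβ x
    calc ∑ i ∈ t, ‖A i x‖ ^ 2 ≤ s := sum_le_hasSum t (fun i _ => sq_nonneg _) hs
      _ ≤ β * ‖x‖ ^ 2 := hsβ
      _ ≤ max β 0 * ‖x‖ ^ 2 := by gcongr; exact le_max_left _ _
  · rintro ⟨β, -, hβ⟩
    refine ⟨β, fun x => ⟨_, (summable_of_sum_le (fun i => sq_nonneg _) (hβ x)).hasSum,
      Real.tsum_le_of_sum_le (fun i => sq_nonneg _) (hβ x)⟩⟩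

theorem OpBessel.summable {A : I → H →L[ℂ] H} (hA : OpBessel A) (x : H) :
    Summable fun i => ‖A i x‖ ^ 2 := by
  obtain ⟨β, -, hβ⟩ := opBessel_iff_sum_le.1 hA
  exact summable_of_sum_le (fun i => sq_nonneg _) (hβ x)

theorem OpBessel.comp_right {A : I → H →L[ℂ] H} (hA : OpBessel A) (T : H →L[ℂ] H) :
    OpBessel fun i => A i ∘L T := by
  obtain ⟨β, hβ0, hβ⟩ := opBessel_iff_sum_le.1 hA
  refine opBessel_iff_sum_le.2 ⟨β * ‖T‖ ^ 2, by positivity, fun x t => ?_⟩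
  calc ∑ i ∈ t, ‖(A i ∘L T) x‖ ^ 2 ≤ β * ‖T x‖ ^ 2 := hβ (T x) t
    _ ≤ β * (‖T‖ * ‖x‖) ^ 2 := by gcongr; exact T.le_opNorm x
    _ = β * ‖T‖ ^ 2 * ‖x‖ ^ 2 := by ring

theorem OpBessel.comp_left {A D : I → H →L[ℂ] H} {δ : ℝ} (hA : OpBessel A)
    (hD : ∀ i, ‖D i‖ ≤ δ) : OpBessel fun i => D i ∘L A i := by
  obtain ⟨β, hβ0, hβ⟩ := opBessel_iff_sum_le.1 hA
  refine opBessel_iff_sum_le.2 ⟨δ ^ 2 * β, by positivity, fun x t => ?_⟩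
  calc ∑ i ∈ t, ‖(D i ∘L A i) x‖ ^ 2 ≤ ∑ i ∈ t, δ ^ 2 * ‖A i x‖ ^ 2 := by
        gcongr with i
        rw [← mul_pow]
        gcongr
        exact (D i).le_of_opNorm_le (hD i) _
    _ ≤ δ ^ 2 * (β * ‖x‖ ^ 2) := by rw [← Finset.mul_sum]; gcongr; exact hβ x t
    _ = δ ^ 2 * β * ‖x‖ ^ 2 := by ring

theorem OpBessel.add {A B : I → H →L[ℂ] H} (hA : OpBessel A) (hB : OpBessel B) :
    OpBessel fun i => A i + B i := by
  obtain ⟨α, hα0, hα⟩ := opBessel_iff_sum_le.1 hA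
  obtain ⟨β, hβ0, hβ⟩ := opBessel_iff_sum_le.1 hB
  refine opBessel_iff_sum_le.2 ⟨2 * (α + β), by positivity, fun x t => ?_⟩
  calc ∑ i ∈ t, ‖(A i + B i) x‖ ^ 2 ≤ ∑ i ∈ t, 2 * (‖A i x‖ ^ 2 + ‖B i x‖ ^ 2) := by
        gcongr with i
        exact (pow_le_pow_left₀ (norm_nonneg _) (norm_add_le _ _) 2).trans add_sq_le
    _ ≤ 2 * (α * ‖x‖ ^ 2 + β * ‖x‖ ^ 2) := by
        rw [← Finset.mul_sum, Finset.sum_add_distrib]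
        exact mul_le_mul_of_nonneg_left (add_le_add (hα x t) (hβ x t)) zero_le_two
    _ = 2 * (α + β) * ‖x‖ ^ 2 := by ring

theorem opBessel_rankOne {e : I → H} (he : Summable fun i => ‖e i‖ ^ 2) (y : H) :
    OpBessel fun i => rankOne ℂ (e i) y := by
  refine opBessel_iff_sum_le.2 ⟨‖y‖ ^ 2 * ∑' i, ‖e i‖ ^ 2, by positivity, fun x t => ?_⟩
  calc ∑ i ∈ t, ‖rankOne ℂ (e i) y x‖ ^ 2 ≤ ∑ i ∈ t, (‖y‖ * ‖x‖) ^ 2 * ‖e i‖ ^ 2 := by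
        gcongr with i
        rw [InnerProductSpace.rankOne_apply, norm_smul, mul_pow]
        gcongr
        exact norm_inner_le_norm y x
    _ ≤ (‖y‖ * ‖x‖) ^ 2 * ∑' i, ‖e i‖ ^ 2 := by
        rw [← Finset.mul_sum]; gcongr; exact he.sum_le_tsum t (fun i _ => sq_nonneg _)
    _ = ‖y‖ ^ 2 * (∑' i, ‖e i‖ ^ 2) * ‖x‖ ^ 2 := by ring

theorem norm_sum_adjoint_apply_sq_le {A : I → H →L[ℂ] H} {β : ℝ} (hβ0 : 0 ≤ β)
    (hβ : ∀ (x : H) (t : Finset I), ∑ i ∈ t, ‖A i x‖ ^ 2 ≤ β * ‖x‖ ^ 2) (z : I → H)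
    (t : Finset I) : ‖∑ i ∈ t, adjoint (A i) (z i)‖ ^ 2 ≤ β * ∑ i ∈ t, ‖z i‖ ^ 2 := by
  set u := ∑ i ∈ t, adjoint (A i) (z i)
  have hu : ‖u‖ ^ 2 ≤ ∑ i ∈ t, ‖z i‖ * ‖A i u‖ := by
    rw [← inner_self_eq_norm_sq (𝕜 := ℂ), sum_inner, map_sum]
    gcongr with i
    rw [adjoint_inner_left]
    exact (RCLike.re_le_norm _).trans (norm_inner_le_norm _ _)
  have hcs : (‖u‖ ^ 2) ^ 2 ≤ (∑ i ∈ t, ‖z i‖ ^ 2) * (β * ‖u‖ ^ 2) :=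
    calc (‖u‖ ^ 2) ^ 2 ≤ (∑ i ∈ t, ‖z i‖ * ‖A i u‖) ^ 2 := by gcongr
      _ ≤ (∑ i ∈ t, ‖z i‖ ^ 2) * ∑ i ∈ t, ‖A i u‖ ^ 2 := Finset.sum_mul_sq_le_sq_mul_sq t _ _
      _ ≤ (∑ i ∈ t, ‖z i‖ ^ 2) * (β * ‖u‖ ^ 2) := by gcongr; exact hβ u t
  rcases (norm_nonneg u).eq_or_lt with hu0 | hu0
  · rw [← hu0, zero_pow two_ne_zero]
    positivity
  · nlinarith [pow_pos hu0 2]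

theorem OpBessel.summable_adjoint_apply {A : I → H →L[ℂ] H} (hA : OpBessel A) {z : I → H}
    (hz : Summable fun i => ‖z i‖ ^ 2) : Summable fun i => adjoint (A i) (z i) := by
  obtain ⟨β, hβ0, hβ⟩ := opBessel_iff_sum_le.1 hA
  refine summable_iff_vanishing_norm.2 fun ε hε => ?_
  obtain ⟨s, hs⟩ := summable_iff_vanishing_norm.1 hz (ε ^ 2 / (β + 1)) (by positivity)
  refine ⟨s, fun t ht => ?_⟩
  have hzt := (le_abs_self _).trans_lt (hs t ht)
  rw [lt_div_iff₀ (by positivity)] at hzt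
  refine (pow_lt_pow_iff_left₀ (norm_nonneg _) hε.le two_ne_zero).1 ?_
  calc ‖∑ i ∈ t, adjoint (A i) (z i)‖ ^ 2 ≤ β * ∑ i ∈ t, ‖z i‖ ^ 2 :=
        norm_sum_adjoint_apply_sq_le hβ0 hβ z t
    _ ≤ (∑ i ∈ t, ‖z i‖ ^ 2) * (β + 1) := by
        nlinarith [Finset.sum_nonneg fun i (_ : i ∈ t) => sq_nonneg ‖z i‖]
    _ < ε ^ 2 := hzt

theorem hasSum_adjoint_apply_of_summable {T : I → H →L[ℂ] H} {M : H →L[ℂ] H}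
    (hT : ∀ x, HasSum (fun i => T i x) (M x)) {y : H}
    (hy : Summable fun i => adjoint (T i) y) :
    HasSum (fun i => adjoint (T i) y) (adjoint M y) := by
  obtain ⟨u, hu⟩ := hy
  convert hu
  refine ext_inner_left ℂ fun x => ?_
  have hMx : HasSum (fun i => ⟪T i x, y⟫) ⟪M x, y⟫ :=
    (hT x).map (innerSLFlip ℂ y) (innerSLFlip ℂ y).continuous
  have hu' : HasSum (fun i => ⟪T i x, y⟫) ⟪x, u⟫ := by
    simpa only [innerSL_apply_apply, adjoint_inner_right] using hu.mapL (innerSL ℂ x)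
  rw [adjoint_inner_right, hMx.unique hu']

theorem IsOpDualOf.symm {A B : I → H →L[ℂ] H} (h : IsOpDualOf B A) (hA : OpBessel A) :
    IsOpDualOf A B := by
  refine ⟨hA, fun x => ?_⟩
  have hT : ∀ y, HasSum (fun i => (adjoint (B i) ∘L A i) y) ((1 : H →L[ℂ] H) y) := h.2
  have hsum : Summable fun i => adjoint (adjoint (B i) ∘L A i) x := by
    simpa only [adjoint_comp, adjoint_adjoint, coe_comp, Function.comp_apply]
      using hA.summable_adjoint_apply (h.1.summable x)
  simpa only [adjoint_comp, adjoint_adjoint, adjoint_one, coe_comp, Function.comp_apply,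
    one_apply_eq_self] using hasSum_adjoint_apply_of_summable hT hsum

theorem adjoint_smul_comp_real_smul_comp (c : ℂ) (r : ℝ) (R P X : H →L[ℂ] H) :
    adjoint (c • R) ∘L (r • P) ∘L X = ((starRingEnd ℂ) c * r) • (adjoint R ∘L P ∘L X) := by
  ext x
  simp only [LinearIsometryEquiv.map_smulₛₗ, smul_apply, comp_apply, map_smul_of_tower]
  module

section Multiplier

variable {A C D : I → H →L[ℂ] H} {δ : ℝ} {M Minv : H →L[ℂ] H}

theorem isOpDualOf_comp_inverse (hA : OpBessel A) (hC : OpBessel C) (hD : ∀ i, ‖D i‖ ≤ δ)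
    (hM : ∀ x, HasSum (fun i => adjoint (C i) (D i (A i x))) (M x)) (hMinv : M ∘L Minv = 1) :
    IsOpDualOf (fun i => D i ∘L A i ∘L Minv) C := by
  refine ⟨(hA.comp_right Minv).comp_left hD, fun x => ?_⟩
  have hD' : ∀ i, ‖adjoint (D i)‖ ≤ δ := fun i => (adjoint.norm_map (D i)).trans_le (hD i)
  have hsum : Summable fun i => adjoint (adjoint (C i) ∘L D i ∘L A i) x := by
    simpa only [adjoint_comp, adjoint_adjoint, coe_comp, Function.comp_apply]
      using hA.summable_adjoint_apply ((hC.comp_left hD').summable x)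
  have hMx := (hasSum_adjoint_apply_of_summable
    (T := fun i => adjoint (C i) ∘L D i ∘L A i) hM hsum).mapL (adjoint Minv)
  have hx : adjoint Minv (adjoint M x) = x := by
    rw [← comp_apply, ← adjoint_comp, hMinv, adjoint_one, one_apply_eq_self]
  simpa only [adjoint_comp, adjoint_adjoint, coe_comp, Function.comp_apply, hx] using hMx

theorem isOpDualOf_adjoint_comp_inverse (hC : OpBessel C) (hD : ∀ i, ‖D i‖ ≤ δ)
    (hM : ∀ x, HasSum (fun i => adjoint (C i) (D i (A i x))) (M x)) (hMinv : Minv ∘L M = 1) :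
    IsOpDualOf (fun i => adjoint (D i) ∘L C i ∘L adjoint Minv) A := by
  refine ⟨(hC.comp_right _).comp_left fun i => (adjoint.norm_map (D i)).trans_le (hD i),
    fun x => ?_⟩
  have hx : Minv (M x) = x := by rw [← comp_apply, hMinv, one_apply_eq_self]
  simpa only [adjoint_comp, adjoint_adjoint, coe_comp, Function.comp_apply, hx]
    using (hM x).mapL Minv

theorem IsOpDualOf.hasSum_adjoint_comp_inverse {B Dinv : I → H →L[ℂ] H} (hB : IsOpDualOf B C)
    (hC : OpBessel C) (hDinv : ∀ i, D i ∘L Dinv i = 1) (x : H) :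
    HasSum (fun i => adjoint (adjoint (D i) ∘L C i ∘L adjoint Minv) (Dinv i (B i x)))
      (Minv x) := by
  have hDDinv : ∀ i y, D i (Dinv i y) = y := fun i y => by
    rw [← comp_apply, hDinv, one_apply_eq_self]
  simpa only [adjoint_comp, adjoint_adjoint, coe_comp, Function.comp_apply, hDDinv]
    using ((hB.symm hC).2 x).mapL Minv

end Multiplier

section Uniqueness

variable {B₀ C : I → H →L[ℂ] H} {T : H →L[ℂ] H}

theorem IsOpDualOf.hasSum_inner_single_sub [DecidableEq I] (hB₀ : IsOpDualOf B₀ C) (j : I)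
    (z x : H) :
    HasSum (fun i => ⟪(Pi.single j z : I → H) i - B₀ i (adjoint (C j) z), C i x⟫) 0 := by
  have hsingle : HasSum (fun i => ⟪(Pi.single j z : I → H) i, C i x⟫) ⟪z, C j x⟫ := by
    rw [funext (Pi.apply_single (fun i y => ⟪y, C i x⟫) (fun i => inner_zero_left _) j z)]
    exact hasSum_pi_single j _
  have hB₀x : HasSum (fun i => ⟪B₀ i (adjoint (C j) z), C i x⟫) ⟪z, C j x⟫ := by
    simpa only [innerSL_apply_apply, adjoint_inner_left, adjoint_inner_right]
      using (hB₀.2 x).mapL (innerSL ℂ (adjoint (C j) z))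
  simpa only [inner_sub_left, sub_self] using hsingle.sub hB₀x

theorem apply_eq_of_forall_isOpDualOf_hasSum {F : I → H →L[ℂ] H} (hB₀ : IsOpDualOf B₀ C)
    (hF : ∀ B, IsOpDualOf B C → ∀ x, HasSum (fun i => F i (B i x)) (T x)) (j : I) (z : H) :
    F j z = T (adjoint (C j) z) := by
  classical
  rcases eq_or_ne z 0 with rfl | hz
  · simp only [map_zero]
  set v := adjoint (C j) z
  set e : I → H := fun i => (Pi.single j z : I → H) i - B₀ i v
  have he : Summable fun i => ‖e i‖ ^ 2 := by
    have hsingle : Summable fun i => ‖(Pi.single j z : I → H) i‖ ^ 2 := by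
      rw [funext (Pi.apply_single (fun (_ : I) (y : H) => ‖y‖ ^ 2) (fun _ => by simp) j z)]
      exact (hasSum_pi_single j _).summable
    refine ((hsingle.add (hB₀.1.summable v)).mul_left 2).of_nonneg_of_le (fun i => sq_nonneg _)
      fun i => ?_
    exact (pow_le_pow_left₀ (norm_nonneg _) (norm_sub_le _ _) 2).trans add_sq_le
  -- `B₀ + N` with `N i y = ⟪z, y⟫ • e i` is again a dual of `C`, since `Σ ⟪e i, C i x⟫ = 0`
  have hdual : IsOpDualOf (fun i => B₀ i + rankOne ℂ (e i) z) C := by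
    refine ⟨hB₀.1.add (opBessel_rankOne he z), fun x => ?_⟩
    simpa only [map_add, add_apply, InnerProductSpace.adjoint_rankOne,
      InnerProductSpace.rankOne_apply, zero_smul, add_zero]
      using (hB₀.2 x).add ((hB₀.hasSum_inner_single_sub j z x).smul_const z)
  have hFN : HasSum (fun i => ⟪z, z⟫ • F i (e i)) 0 := by
    simpa only [add_apply, map_add, add_sub_cancel_left, InnerProductSpace.rankOne_apply,
      map_smul, sub_self] using (hF _ hdual z).sub (hF B₀ hB₀ z)
  have hFe : HasSum (fun i => F i (e i)) (F j z - T v) := by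
    have hsingle : HasSum (fun i => F i ((Pi.single j z : I → H) i)) (F j z) := by
      rw [funext (Pi.apply_single (fun i => ⇑(F i)) (fun i => map_zero _) j z)]
      exact hasSum_pi_single j _
    simpa only [e, map_sub] using hsingle.sub (hF B₀ hB₀ v)
  have h := (hFe.const_smul ⟪z, z⟫).unique hFN
  exact sub_eq_zero.1 ((smul_eq_zero.1 h).resolve_left (inner_self_ne_zero.2 hz))

theorem eq_of_forall_isOpDualOf_hasSum {D Dinv Q Q' : I → H →L[ℂ] H} (hB₀ : IsOpDualOf B₀ C)
    (hDinv : ∀ i, Dinv i ∘L D i = 1)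
    (hQ : ∀ B, IsOpDualOf B C → ∀ x, HasSum (fun i => adjoint (Q i) (Dinv i (B i x))) (T x))
    (hQ' : ∀ B, IsOpDualOf B C → ∀ x, HasSum (fun i => adjoint (Q' i) (Dinv i (B i x))) (T x)) :
    Q = Q' := by
  funext j
  have h : adjoint (Q j) ∘L Dinv j = adjoint (Q' j) ∘L Dinv j := by
    ext z
    exact (apply_eq_of_forall_isOpDualOf_hasSum (F := fun i => adjoint (Q i) ∘L Dinv i)
      hB₀ hQ j z).trans
      (apply_eq_of_forall_isOpDualOf_hasSum (F := fun i => adjoint (Q' i) ∘L Dinv i)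
        hB₀ hQ' j z).symm
  have h' : adjoint (Q j) = adjoint (Q' j) := by
    simpa only [comp_assoc, hDinv, one_def, comp_id] using congrArg (· ∘L D j) h
  exact adjoint.injective h'

end Uniqueness

theorem adjoint_real_smul_fproj (r : ℝ) (U : Submodule ℂ H) (hU : IsClosed (U : Set H)) :
    adjoint (r • fproj U hU) = r • fproj U hU := by
  have : CompleteSpace U := hU.completeSpace_coe
  rw [← Complex.coe_smul, LinearIsometryEquiv.map_smulₛₗ, Complex.conj_ofReal]
  exact congrArg _ (isSelfAdjoint_starProjection U).adjoint_eq

theorem opBessel_smul_fproj {W : I → Submodule ℂ H} (hW : ∀ i, IsClosed (W i : Set H))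
    {ω : I → ℝ} (hω : ∀ i, 0 ≤ ω i) {β : ℝ}
    (hβ : ∀ x : H, ∃ s : ℝ,
      HasSum (fun i => ω i ^ 2 * ‖fproj (W i) (hW i) x‖ ^ 2) s ∧ s ≤ β * ‖x‖ ^ 2) :
    OpBessel fun i => ω i • fproj (W i) (hW i) := by
  refine ⟨β, fun x => ?_⟩
  obtain ⟨s, hs, hsβ⟩ := hβ x
  refine ⟨s, ?_, hsβ⟩
  convert hs using 2 with i
  rw [smul_apply, norm_smul, Real.norm_of_nonneg (hω i), mul_pow]

theorem CondC.norm_smul_le {m : I → ℂ} {R : I → H →L[ℂ] H} {γ δ : ℝ} (hC : CondC m R γ δ)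
    (i : I) : ‖m i • R i‖ ≤ δ := by
  obtain ⟨-, hδ, hbound⟩ := hC
  rw [← adjoint.norm_map, LinearIsometryEquiv.map_smulₛₗ]
  exact opNorm_le_bound _ hδ.le fun x => (hbound i x).2.1

end

theorem inverse_multiplier_representation_general
    {H : Type*} [NormedAddCommGroup H] [InnerProductSpace ℂ H] [CompleteSpace H]
    [Nontrivial H]
    {I : Type*}
    (W V : I → Submodule ℂ H)
    (hW : ∀ i, IsClosed ((W i) : Set H)) (hV : ∀ i, IsClosed ((V i) : Set H))
    (ω υ : I → ℝ)
    (hωseq : ∀ i, 0 ≤ ω i ∧ (ω i = 0 ↔ W i = ⊥))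
    (hυseq : ∀ i, 0 ≤ υ i ∧ (υ i = 0 ↔ V i = ⊥))
    (αW βW αV βV : ℝ)
    (hWframe : ∀ x : H, ∃ s : ℝ,
      HasSum (fun i => ω i ^ 2 * ‖fproj (W i) (hW i) x‖ ^ 2) s ∧
      αW * ‖x‖ ^ 2 ≤ s ∧ s ≤ βW * ‖x‖ ^ 2)
    (hVframe : ∀ x : H, ∃ s : ℝ,
      HasSum (fun i => υ i ^ 2 * ‖fproj (V i) (hV i) x‖ ^ 2) s ∧
      αV * ‖x‖ ^ 2 ≤ s ∧ s ≤ βV * ‖x‖ ^ 2)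
    (m : I → ℂ)
    (R : I → H →L[ℂ] H)
    (γ δ : ℝ) (hC : CondC m R γ δ)
    -- the fusion frame operator S_{W,ω} and its inverse
    (Sinv : H →L[ℂ] H)
    -- the multiplier M = M_{mR,V,W} and its inverse
    (M Minv : H →L[ℂ] H)
    (hM : ∀ x : H, HasSum
      (fun i => m i • (υ i * ω i) • fproj (V i) (hV i) ((R i) (fproj (W i) (hW i) x))) (M x))
    (hMinv : M ∘L Minv = 1 ∧ Minv ∘L M = 1)
    -- the inverses (m_iR_i)⁻¹
    (Rinv : I → H →L[ℂ] H)
    (hRinv : ∀ i, (m i • R i) ∘L Rinv i = 1 ∧ Rinv i ∘L (m i • R i) = 1)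
    -- L_i = υ_i R_i* P_{V_i} (M*)⁻¹ − (ω_i/conj(m_i)) P_{W_i} S⁻¹
    (L : I → H →L[ℂ] H)
    (hL : ∀ i, L i =
      (υ i : ℂ) • ((ContinuousLinearMap.adjoint (R i)).comp
        ((fproj (V i) (hV i)).comp (ContinuousLinearMap.adjoint Minv))) -
      ((ω i : ℂ) / (starRingEnd ℂ) (m i)) • ((fproj (W i) (hW i)).comp Sinv))
    -- Q_i† = ω_i P_{W_i} S⁻¹ + conj(m_i) L_i
    (Qdag : I → H →L[ℂ] H)
    (hQdag : ∀ i, Qdag i =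
      (ω i : ℂ) • ((fproj (W i) (hW i)).comp Sinv) + (starRingEnd ℂ) (m i) • L i) :
    -- Q† = {conj(m_i) υ_i R_i* P_{V_i} (M*)⁻¹}
    (∀ i, Qdag i = ((starRingEnd ℂ) (m i) * (υ i : ℂ)) •
      ((ContinuousLinearMap.adjoint (R i)).comp
        ((fproj (V i) (hV i)).comp (ContinuousLinearMap.adjoint Minv)))) ∧
    -- Q† is an operator-valued dual frame of A_W = {ω_i P_{W_i}}
    IsOpDualOf Qdag (fun i => ω i • fproj (W i) (hW i)) ∧
    -- M⁻¹ = T*_{Q†} D_{(mR)⁻¹} T_B for every operator-valued dual frame B of A_V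
    (∀ B : I → H →L[ℂ] H, IsOpDualOf B (fun i => υ i • fproj (V i) (hV i)) →
      ∀ x : H, HasSum
        (fun i => (ContinuousLinearMap.adjoint (Qdag i)) ((Rinv i) (B i x))) (Minv x)) ∧
    -- and Q† is the unique such operator-valued dual frame of A_W
    (∀ Q : I → H →L[ℂ] H, IsOpDualOf Q (fun i => ω i • fproj (W i) (hW i)) →
      (∀ B : I → H →L[ℂ] H, IsOpDualOf B (fun i => υ i • fproj (V i) (hV i)) →
        ∀ x : H, HasSum
          (fun i => (ContinuousLinearMap.adjoint (Q i)) ((Rinv i) (B i x))) (Minv x)) →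
      ∀ i, Q i = Qdag i) := by
  have hQdag_eq : ∀ i, Qdag i = ((starRingEnd ℂ) (m i) * (υ i : ℂ)) •
      (adjoint (R i) ∘L fproj (V i) (hV i) ∘L adjoint Minv) := fun i => by
    have hm : m i ≠ 0 := fun hm =>
      (one_ne_zero : (1 : H →L[ℂ] H) ≠ 0) (by simpa [hm] using (hRinv i).1.symm)
    rw [hQdag i, hL i, smul_sub, smul_smul, smul_smul,
      mul_div_cancel₀ _ ((map_ne_zero _).2 hm), add_sub_cancel]
  have hQ : Qdag = fun i => adjoint (m i • R i) ∘L (υ i • fproj (V i) (hV i)) ∘L adjoint Minv :=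
    funext fun i => by rw [adjoint_smul_comp_real_smul_comp, hQdag_eq i]
  have hAW := opBessel_smul_fproj hW (fun i => (hωseq i).1)
    fun x => (hWframe x).imp fun _ h => ⟨h.1, h.2.2⟩
  have hAV := opBessel_smul_fproj hV (fun i => (hυseq i).1)
    fun x => (hVframe x).imp fun _ h => ⟨h.1, h.2.2⟩
  have hMsum : ∀ x, HasSum (fun i => adjoint (υ i • fproj (V i) (hV i))
      ((m i • R i) ((ω i • fproj (W i) (hW i)) x))) (M x) := fun x => by
    convert hM x using 2 with i
    simp only [adjoint_real_smul_fproj, smul_apply, map_smul_of_tower]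
    module
  have hrep : ∀ B, IsOpDualOf B (fun i => υ i • fproj (V i) (hV i)) → ∀ x,
      HasSum (fun i => adjoint (Qdag i) (Rinv i (B i x))) (Minv x) :=
    hQ ▸ fun B hB => hB.hasSum_adjoint_comp_inverse hAV fun i => (hRinv i).1
  refine ⟨hQdag_eq, hQ ▸ isOpDualOf_adjoint_comp_inverse hAV hC.norm_smul_le hMsum hMinv.2, hrep,
    fun Q _ hQrep => congrFun ?_⟩
  exact eq_of_forall_isOpDualOf_hasSum (isOpDualOf_comp_inverse hAW hAV hC.norm_smul_le hMsum
    hMinv.1) (fun i => (hRinv i).2) hQrep hrep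

/-- the inverse of an invertible `(m,R)`-Bessel fusion multiplier is represented
via the unique operator-valued dual frame `Q† = {ω_iP_{W_i}S⁻¹ + conj(m_i)L_i}` of
`A_W = {ω_iP_{W_i}}` satisfying `M⁻¹ = T*_{Q†} D_{(mR)⁻¹} T_B` for every operator-valued dual
frame `B` of `A_V = {υ_iP_{V_i}}`. -/
theorem inverse_multiplier_representation
    {H : Type*} [NormedAddCommGroup H] [InnerProductSpace ℂ H] [CompleteSpace H]
    [TopologicalSpace.SeparableSpace H] [Nontrivial H]
    {I : Type*} [Countable I]
    (W V : I → Submodule ℂ H)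
    (hW : ∀ i, IsClosed ((W i) : Set H)) (hV : ∀ i, IsClosed ((V i) : Set H))
    (ω υ : I → ℝ)
    (hωseq : ∀ i, 0 ≤ ω i ∧ (ω i = 0 ↔ W i = ⊥))
    (hυseq : ∀ i, 0 ≤ υ i ∧ (υ i = 0 ↔ V i = ⊥))
    (αW βW αV βV : ℝ) (hαW : 0 < αW) (hαV : 0 < αV)
    (hWframe : ∀ x : H, ∃ s : ℝ,
      HasSum (fun i => ω i ^ 2 * ‖fproj (W i) (hW i) x‖ ^ 2) s ∧
      αW * ‖x‖ ^ 2 ≤ s ∧ s ≤ βW * ‖x‖ ^ 2)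
    (hVframe : ∀ x : H, ∃ s : ℝ,
      HasSum (fun i => υ i ^ 2 * ‖fproj (V i) (hV i) x‖ ^ 2) s ∧
      αV * ‖x‖ ^ 2 ≤ s ∧ s ≤ βV * ‖x‖ ^ 2)
    (m : I → ℂ) (hm : BddAbove (Set.range fun i => ‖m i‖))
    (R : I → H →L[ℂ] H) (hR : BddAbove (Set.range fun i => ‖R i‖))
    (γ δ : ℝ) (hC : CondC m R γ δ)
    -- the fusion frame operator S_{W,ω} and its inverse
    (S Sinv : H →L[ℂ] H)
    (hS : ∀ x : H, HasSum (fun i => (ω i ^ 2) • fproj (W i) (hW i) x) (S x))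
    (hSinv : S ∘L Sinv = 1 ∧ Sinv ∘L S = 1)
    -- the multiplier M = M_{mR,V,W} and its inverse
    (M Minv : H →L[ℂ] H)
    (hM : ∀ x : H, HasSum
      (fun i => m i • (υ i * ω i) • fproj (V i) (hV i) ((R i) (fproj (W i) (hW i) x))) (M x))
    (hMinv : M ∘L Minv = 1 ∧ Minv ∘L M = 1)
    -- the inverses (m_iR_i)⁻¹
    (Rinv : I → H →L[ℂ] H)
    (hRinv : ∀ i, (m i • R i) ∘L Rinv i = 1 ∧ Rinv i ∘L (m i • R i) = 1)
    -- L_i = υ_i R_i* P_{V_i} (M*)⁻¹ − (ω_i/conj(m_i)) P_{W_i} S⁻¹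
    (L : I → H →L[ℂ] H)
    (hL : ∀ i, L i =
      (υ i : ℂ) • ((ContinuousLinearMap.adjoint (R i)).comp
        ((fproj (V i) (hV i)).comp (ContinuousLinearMap.adjoint Minv))) -
      ((ω i : ℂ) / (starRingEnd ℂ) (m i)) • ((fproj (W i) (hW i)).comp Sinv))
    -- Q_i† = ω_i P_{W_i} S⁻¹ + conj(m_i) L_i
    (Qdag : I → H →L[ℂ] H)
    (hQdag : ∀ i, Qdag i =
      (ω i : ℂ) • ((fproj (W i) (hW i)).comp Sinv) + (starRingEnd ℂ) (m i) • L i) :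
    -- Q† = {conj(m_i) υ_i R_i* P_{V_i} (M*)⁻¹}
    (∀ i, Qdag i = ((starRingEnd ℂ) (m i) * (υ i : ℂ)) •
      ((ContinuousLinearMap.adjoint (R i)).comp
        ((fproj (V i) (hV i)).comp (ContinuousLinearMap.adjoint Minv)))) ∧
    -- Q† is an operator-valued dual frame of A_W = {ω_i P_{W_i}}
    IsOpDualOf Qdag (fun i => ω i • fproj (W i) (hW i)) ∧
    -- M⁻¹ = T*_{Q†} D_{(mR)⁻¹} T_B for every operator-valued dual frame B of A_V
    (∀ B : I → H →L[ℂ] H, IsOpDualOf B (fun i => υ i • fproj (V i) (hV i)) →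
      ∀ x : H, HasSum
        (fun i => (ContinuousLinearMap.adjoint (Qdag i)) ((Rinv i) (B i x))) (Minv x)) ∧
    -- and Q† is the unique such operator-valued dual frame of A_W
    (∀ Q : I → H →L[ℂ] H, IsOpDualOf Q (fun i => ω i • fproj (W i) (hW i)) →
      (∀ B : I → H →L[ℂ] H, IsOpDualOf B (fun i => υ i • fproj (V i) (hV i)) →
        ∀ x : H, HasSum
          (fun i => (ContinuousLinearMap.adjoint (Q i)) ((Rinv i) (B i x))) (Minv x)) →
      ∀ i, Q i = Qdag i) :=
  inverse_multiplier_representation_general W V hW hV ω υ hωseq hυseq αW βW αV βV hWframe hVframe m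
    R γ δ hC Sinv M Minv hM hMinv Rinv hRinv L hL Qdag hQdag
end
end
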